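/- Let K be a field with char K ≠ 2 and let 𝔤 be a Lie algebra over K. Let Δ be the quotient of the free Lie product of 𝔤 and 𝔤^ψ by the ideal [𝓛, 𝓛], where 𝓛 is the ideal of the free product generated by the elements x − x^ψ. Let Γ = Aug(U(𝔤)) ⋊ 𝔤 be the semidirect product of the augmentation ideal of the universal enveloping algebra U(𝔤), viewed as an abelian Lie algebra on which 𝔤 acts by left multiplication, with 𝔤. Then the homomorphism θ: Δ → Γ defined by θ(x) = (0, x) and θ(x^ψ) = (−x, x) for x ∈ 𝔤 is an isomorphism of Lie algebras, and θ carries 𝓛 onto Aug(U(𝔤)). -/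

import Mathlib

/- Formalization of a statement from "Weak commutativity for Lie algebras"
   (arXiv:1808.10303). All Lie algebras are over a fixed field `K` with `char K ≠ 2`. -/

universe u v

set_option linter.unusedVariables false

attribute [local instance 100] LieRing.ofAssociativeRing

section FreeProduct

variable (K : Type u) [Field K] (g : Type v) [LieRing g] [LieAlgebra K g]

/-- The image of `x ∈ g` (first copy) in the free Lie algebra on two copies of `g`. -/
noncomputable def ofl (x : g) : FreeLieAlgebra K (g ⊕ g) := FreeLieAlgebra.of K (Sum.inl x)

/-- The image of `xᵠ ∈ gᵠ` (second copy) in the free Lie algebra on two copies of `g`. -/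
noncomputable def ofr (x : g) : FreeLieAlgebra K (g ⊕ g) := FreeLieAlgebra.of K (Sum.inr x)

/-- Relators presenting the free Lie product (coproduct) of `g` and its copy `gᵠ` as a
quotient of the free Lie algebra on the disjoint union of two copies of the underlying
type of `g`. -/
def freeProdRelators : Set (FreeLieAlgebra K (g ⊕ g)) :=
  { z | (∃ x y : g, z = ofl K g (x + y) - ofl K g x - ofl K g y)
      ∨ (∃ (c : K) (x : g), z = ofl K g (c • x) - c • ofl K g x)
      ∨ (∃ x y : g, z = ofl K g ⁅x, y⁆ - ⁅ofl K g x, ofl K g y⁆)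
      ∨ (∃ x y : g, z = ofr K g (x + y) - ofr K g x - ofr K g y)
      ∨ (∃ (c : K) (x : g), z = ofr K g (c • x) - c • ofr K g x)
      ∨ (∃ x y : g, z = ofr K g ⁅x, y⁆ - ⁅ofr K g x, ofr K g y⁆) }

/-- The ideal of relations presenting the free Lie product of `g` and `gᵠ`. -/
noncomputable def freeProdIdeal : LieIdeal K (FreeLieAlgebra K (g ⊕ g)) :=
  LieSubmodule.lieSpan K (FreeLieAlgebra K (g ⊕ g)) (freeProdRelators K g)

/-- The free Lie product (coproduct) of `g` and an isomorphic copy `gᵠ`. -/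
abbrev freeLieProd : Type (max u v) := FreeLieAlgebra K (g ⊕ g) ⧸ freeProdIdeal K g

/-- The canonical image of `x ∈ g` in the free Lie product. -/
noncomputable def fpι (x : g) : freeLieProd K g :=
  LieSubmodule.Quotient.mk (N := freeProdIdeal K g) (ofl K g x)

/-- The canonical image of `xᵠ ∈ gᵠ` in the free Lie product. -/
noncomputable def fpψ (x : g) : freeLieProd K g :=
  LieSubmodule.Quotient.mk (N := freeProdIdeal K g) (ofr K g x)

/-- The ideal `𝓛` of the free Lie product generated by the elements `x - xᵠ`. -/
noncomputable def freeProdL : LieIdeal K (freeLieProd K g) :=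
  LieSubmodule.lieSpan K (freeLieProd K g) (Set.range fun x : g => fpι K g x - fpψ K g x)

/-- The Lie algebra `Δ = ⟨g, gᵠ | ⁅𝓛, 𝓛⁆ = 0⟩`: the quotient of the free Lie product of `g`
and `gᵠ` by the ideal `⁅𝓛, 𝓛⁆`. -/
abbrev deltaAlg : Type (max u v) :=
  freeLieProd K g ⧸ (⁅freeProdL K g, freeProdL K g⁆ : LieIdeal K (freeLieProd K g))

/-- The canonical image of `x ∈ g` in `Δ`. -/
noncomputable def deltaι (x : g) : deltaAlg K g :=
  LieSubmodule.Quotient.mk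
    (N := (⁅freeProdL K g, freeProdL K g⁆ : LieIdeal K (freeLieProd K g))) (fpι K g x)

/-- The canonical image of `xᵠ` in `Δ`. -/
noncomputable def deltaψ (x : g) : deltaAlg K g :=
  LieSubmodule.Quotient.mk
    (N := (⁅freeProdL K g, freeProdL K g⁆ : LieIdeal K (freeLieProd K g))) (fpψ K g x)

/-- The image `𝓛̄ ⊆ Δ` of the ideal `𝓛`, i.e. the ideal of `Δ` generated by the elements
`x - xᵠ`. -/
noncomputable def deltaL : LieIdeal K (deltaAlg K g) :=
  LieSubmodule.lieSpan K (deltaAlg K g) (Set.range fun x : g => deltaι K g x - deltaψ K g x)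

end FreeProduct

section Gamma

variable (K : Type u) [Field K] (g : Type v) [LieRing g] [LieAlgebra K g]

/-- The semidirect product Lie ring structure on `U(g) × g`, where the first factor is
regarded as an abelian Lie algebra on which `g` acts by left multiplication (through
`ι : g → U(g)`); the bracket is `⁅(u₁, x₁), (u₂, x₂)⁆ = (x₁·u₂ - x₂·u₁, ⁅x₁, x₂⁆)`. -/
noncomputable instance semidirectLieRing : LieRing (UniversalEnvelopingAlgebra K g × g) where
  bracket p q :=
    (UniversalEnvelopingAlgebra.ι K p.2 * q.1 - UniversalEnvelopingAlgebra.ι K q.2 * p.1,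
      ⁅p.2, q.2⁆)
  add_lie p q r := by
    refine Prod.ext ?_ ?_ <;> dsimp
    · simp only [map_add, add_mul, mul_add]; abel
    · exact add_lie _ _ _
  lie_add p q r := by
    refine Prod.ext ?_ ?_ <;> dsimp
    · simp only [map_add, add_mul, mul_add]; abel
    · exact lie_add _ _ _
  lie_self p := by
    refine Prod.ext ?_ ?_ <;> dsimp <;> simp
  leibniz_lie p q r := by
    have hlie : ∀ a b : g,
        UniversalEnvelopingAlgebra.ι K ⁅a, b⁆
          = UniversalEnvelopingAlgebra.ι K a * UniversalEnvelopingAlgebra.ι K b -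
            UniversalEnvelopingAlgebra.ι K b * UniversalEnvelopingAlgebra.ι K a := by
      intro a b
      rw [LieHom.map_lie, Ring.lie_def]
    refine Prod.ext ?_ ?_ <;> dsimp
    · simp only [hlie, sub_mul, mul_sub, mul_assoc]
      abel
    · exact leibniz_lie _ _ _

/-- The semidirect product Lie algebra structure on `U(g) × g`. -/
noncomputable instance semidirectLieAlgebra :
    LieAlgebra K (UniversalEnvelopingAlgebra K g × g) where
  lie_smul t p q := by
    refine Prod.ext ?_ ?_
    · show UniversalEnvelopingAlgebra.ι K p.2 * (t • q.1) -
          UniversalEnvelopingAlgebra.ι K (t • q.2) * p.1 =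
        t • (UniversalEnvelopingAlgebra.ι K p.2 * q.1 -
          UniversalEnvelopingAlgebra.ι K q.2 * p.1)
      rw [map_smul, smul_sub, mul_smul_comm, smul_mul_assoc]
    · exact lie_smul _ _ _

/-- The augmentation (counit) of the universal enveloping algebra: the unique algebra
homomorphism `U(g) → K` sending the image of `g` to `0`. -/
noncomputable def lieAugmentation : UniversalEnvelopingAlgebra K g →ₐ[K] K :=
  UniversalEnvelopingAlgebra.lift K (0 : g →ₗ⁅K⁆ K)

/-- The Lie algebra `Γ = Aug(U(g)) ⋊ g`: the Lie subalgebra of the semidirect product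
`U(g) ⋊ g` consisting of the pairs whose first component lies in the augmentation
ideal. -/
noncomputable def gammaAlg : LieSubalgebra K (UniversalEnvelopingAlgebra K g × g) :=
  { carrier := { p | lieAugmentation K g p.1 = 0 }
    add_mem' := fun {p q} hp hq => by
      have : lieAugmentation K g (p.1 + q.1) = 0 := by
        rw [map_add]
        rw [Set.mem_setOf_eq] at hp hq
        rw [hp, hq, add_zero]
      exact this
    zero_mem' := by simp
    smul_mem' := fun c p hp => by
      have : lieAugmentation K g (c • p.1) = 0 := by
        rw [map_smul]
        rw [Set.mem_setOf_eq] at hp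
        rw [hp, smul_zero]
      exact this
    lie_mem' := fun {p q} hp hq => by
      rw [Set.mem_setOf_eq] at hp hq ⊢
      show lieAugmentation K g
        (UniversalEnvelopingAlgebra.ι K p.2 * q.1 -
          UniversalEnvelopingAlgebra.ι K q.2 * p.1) = 0
      rw [map_sub, map_mul, map_mul, hp, hq, mul_zero, mul_zero, sub_zero] }

end Gamma

/-! In `Δ` the elements `w x = x - xᵠ` (`deltaW`) lie in the ideal `𝓛̄`, which is abelian
because `⁅𝓛, 𝓛⁆` has been factored out; hence `w ⁅x, y⁆ = ⁅x, w y⁆ - ⁅y, w x⁆`, and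
`x · (d, c) = (⁅x, d⁆ + c • w x, 0)` makes `Δ × K` a `g`-module, hence a `U(g)`-module.
The map `φ u = (u · (0, 1)).1` (`uenvToDelta`) lands in `𝓛̄` and satisfies
`φ (x u) = ⁅x, φ u⁆ + ε(u) • w x`, so `η (u, x) = φ u + x` (`gammaToDelta`) is a Lie morphism
`Γ → Δ`. Comparing on generators gives `η ∘ θ = id`, and induction on `U(g)` gives
`θ (φ u) = (u - ε(u), 0)`, whence `θ ∘ η = id` and `𝓛̄ = φ (Aug U(g))` is the kernel of the
projection of `Γ` onto `g`. -/

namespace LieIdeal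

variable {R L : Type*} [CommRing R] [LieRing L] [LieAlgebra R L]

def mkLieHom (I : LieIdeal R L) : L →ₗ⁅R⁆ L ⧸ I :=
  { (LieSubmodule.Quotient.mk' I : L →ₗ[R] L ⧸ I) with
    map_lie' := fun {x y} => LieSubmodule.Quotient.mk_bracket (I := I) x y }

lemma mkLieHom_surjective (I : LieIdeal R L) : Function.Surjective (mkLieHom I) :=
  Quotient.mk_surjective

lemma ker_mkLieHom (I : LieIdeal R L) : (mkLieHom I).ker = I := by
  ext x
  exact LieHom.mem_ker.trans LieSubmodule.Quotient.mk_eq_zero'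

end LieIdeal

namespace UniversalEnvelopingAlgebra

variable {R L : Type*} [CommRing R] [LieRing L] [LieAlgebra R L]

lemma adjoin_range_ι : Algebra.adjoin R (Set.range (ι R (L := L))) = ⊤ := by
  have hsurj : Function.Surjective (mkAlgHom R L) := Quotient.mk_surjective
  rw [show ⇑(ι R (L := L)) = mkAlgHom R L ∘ TensorAlgebra.ι R from rfl,
    Set.range_comp, ← AlgHom.map_adjoin, TensorAlgebra.adjoin_range_ι, Algebra.map_top,
    (AlgHom.range_eq_top _).mpr hsurj]

lemma induction_ι_mul {P : UniversalEnvelopingAlgebra R L → Prop} (one : P 1)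
    (add : ∀ u v, P u → P v → P (u + v)) (smul : ∀ (c : R) u, P u → P (c • u))
    (ι_mul : ∀ x u, P u → P (ι R x * u)) (u : UniversalEnvelopingAlgebra R L) : P u := by
  suffices h : ∀ a, ∀ v, P v → P (a * v) by simpa using h u 1 one
  intro a
  have ha : a ∈ Algebra.adjoin R (Set.range (ι R (L := L))) := by
    rw [adjoin_range_ι]; trivial
  induction ha using Algebra.adjoin_induction with
  | mem _ hx => obtain ⟨x, rfl⟩ := hx; exact ι_mul x
  | algebraMap c => intro v hv; simpa [Algebra.smul_def] using smul c v hv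
  | add a b _ _ ha hb => intro v hv; simpa [add_mul] using add _ _ (ha v hv) (hb v hv)
  | mul a b _ _ ha hb => intro v hv; simpa [mul_assoc] using ha _ (hb v hv)

end UniversalEnvelopingAlgebra

section Delta

variable (K : Type u) [Field K] (g : Type v) [LieRing g] [LieAlgebra K g]

noncomputable def toDelta : FreeLieAlgebra K (g ⊕ g) →ₗ⁅K⁆ deltaAlg K g :=
  (LieIdeal.mkLieHom _).comp (LieIdeal.mkLieHom (freeProdIdeal K g))

lemma toDelta_surjective : Function.Surjective (toDelta K g) :=
  (LieIdeal.mkLieHom_surjective _).comp (LieIdeal.mkLieHom_surjective _)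

variable {K g}

lemma toDelta_eq_zero_of_mem_relators {z : FreeLieAlgebra K (g ⊕ g)}
    (hz : z ∈ freeProdRelators K g) : toDelta K g z = 0 := by
  have h : LieIdeal.mkLieHom (freeProdIdeal K g) z = 0 :=
    LieSubmodule.Quotient.mk_eq_zero'.mpr (LieSubmodule.subset_lieSpan hz)
  rw [toDelta, LieHom.comp_apply, h, map_zero]

variable (K g)

noncomputable def deltaιHom : g →ₗ⁅K⁆ deltaAlg K g where
  toFun := deltaι K g
  map_add' x y := by
    have h := toDelta_eq_zero_of_mem_relators (K := K) (Or.inl ⟨x, y, rfl⟩)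
    rwa [map_sub, map_sub, sub_sub, sub_eq_zero] at h
  map_smul' c x := by
    have h := toDelta_eq_zero_of_mem_relators (K := K) (Or.inr (Or.inl ⟨c, x, rfl⟩))
    rwa [map_sub, map_smul, sub_eq_zero] at h
  map_lie' {x y} := by
    have h := toDelta_eq_zero_of_mem_relators (K := K) (Or.inr (Or.inr (Or.inl ⟨x, y, rfl⟩)))
    rwa [map_sub, LieHom.map_lie, sub_eq_zero] at h

noncomputable def deltaψHom : g →ₗ⁅K⁆ deltaAlg K g where
  toFun := deltaψ K g
  map_add' x y := by
    have h := toDelta_eq_zero_of_mem_relators (K := K)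
      (Or.inr (Or.inr (Or.inr (Or.inl ⟨x, y, rfl⟩))))
    rwa [map_sub, map_sub, sub_sub, sub_eq_zero] at h
  map_smul' c x := by
    have h := toDelta_eq_zero_of_mem_relators (K := K)
      (Or.inr (Or.inr (Or.inr (Or.inr (Or.inl ⟨c, x, rfl⟩)))))
    rwa [map_sub, map_smul, sub_eq_zero] at h
  map_lie' {x y} := by
    have h := toDelta_eq_zero_of_mem_relators (K := K)
      (Or.inr (Or.inr (Or.inr (Or.inr (Or.inr ⟨x, y, rfl⟩)))))
    rwa [map_sub, LieHom.map_lie, sub_eq_zero] at h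

@[simp] lemma deltaιHom_apply (x : g) : deltaιHom K g x = deltaι K g x := rfl

@[simp] lemma deltaψHom_apply (x : g) : deltaψHom K g x = deltaψ K g x := rfl

variable {K g}

lemma deltaι_lie (x y : g) : deltaι K g ⁅x, y⁆ = ⁅deltaι K g x, deltaι K g y⁆ :=
  (deltaιHom K g).map_lie x y

lemma deltaψ_lie (x y : g) : deltaψ K g ⁅x, y⁆ = ⁅deltaψ K g x, deltaψ K g y⁆ :=
  (deltaψHom K g).map_lie x y

variable (K g)

noncomputable def deltaW : g →ₗ[K] deltaAlg K g :=
  (deltaιHom K g : g →ₗ[K] deltaAlg K g) - deltaψHom K g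

variable {K g}

lemma deltaW_apply (x : g) : deltaW K g x = deltaι K g x - deltaψ K g x := rfl

lemma deltaW_mem_deltaL (x : g) : deltaW K g x ∈ deltaL K g :=
  LieSubmodule.subset_lieSpan ⟨x, rfl⟩

lemma deltaL_le_map_freeProdL :
    deltaL K g ≤ (freeProdL K g).map (LieIdeal.mkLieHom _) := by
  refine LieSubmodule.lieSpan_le.mpr ?_
  rintro _ ⟨x, rfl⟩
  exact LieIdeal.mem_map (f := LieIdeal.mkLieHom _)
    (LieSubmodule.subset_lieSpan (s := Set.range fun x : g => fpι K g x - fpψ K g x) ⟨x, rfl⟩)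

lemma deltaL_lie_deltaL : ⁅deltaL K g, deltaL K g⁆ = ⊥ := by
  refine eq_bot_iff.mpr ((LieSubmodule.mono_lie deltaL_le_map_freeProdL
    deltaL_le_map_freeProdL).trans ?_)
  rw [← LieIdeal.map_bracket_eq _ (LieIdeal.mkLieHom_surjective _), le_bot_iff,
    LieIdeal.map_eq_bot_iff, LieIdeal.ker_mkLieHom]

lemma lie_eq_zero_of_mem_deltaL {a b : deltaAlg K g} (ha : a ∈ deltaL K g)
    (hb : b ∈ deltaL K g) : ⁅a, b⁆ = 0 :=
  (LieSubmodule.lie_eq_bot_iff _ _).mp deltaL_lie_deltaL a ha b hb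

lemma deltaW_lie (x y : g) :
    deltaW K g ⁅x, y⁆ = ⁅deltaι K g x, deltaW K g y⁆ - ⁅deltaι K g y, deltaW K g x⁆ := by
  have hw : ⁅deltaW K g x, deltaW K g y⁆ = 0 :=
    lie_eq_zero_of_mem_deltaL (deltaW_mem_deltaL x) (deltaW_mem_deltaL y)
  rw [← sub_eq_zero, ← neg_eq_zero, neg_sub, ← hw]
  simp only [deltaW_apply, deltaι_lie, deltaψ_lie, lie_sub, sub_lie]
  rw [← lie_skew (deltaι K g y) (deltaι K g x), ← lie_skew (deltaι K g y) (deltaψ K g x)]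
  abel

end Delta

section Representation

variable {K : Type u} [Field K] {g : Type v} [LieRing g] [LieAlgebra K g]

open UniversalEnvelopingAlgebra

lemma lieAugmentation_ι (x : g) : lieAugmentation K g (ι K x) = 0 :=
  lift_ι_apply K 0 x

variable (K g)

/-- `x` acts on `Δ × K` by `(d, c) ↦ (⁅x, d⁆ + c • w x, 0)`: the extension of the adjoint
module `Δ` by the trivial module `K` along the cocycle `w`. -/
noncomputable def cocycleRep : g →ₗ⁅K⁆ Module.End K (deltaAlg K g × K) where
  toFun x := LinearMap.inl K _ K ∘ₗ
    (LieAlgebra.ad K _ (deltaι K g x)).coprod (LinearMap.toSpanSingleton K _ (deltaW K g x))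
  map_add' x y := by
    ext p <;> simp [← deltaιHom_apply]
  map_smul' c x := by
    ext p <;> simp [← deltaιHom_apply]
  map_lie' {x y} := by
    ext p <;> simp [deltaι_lie, deltaW_lie]

noncomputable def cocycleRepUEA :
    UniversalEnvelopingAlgebra K g →ₐ[K] Module.End K (deltaAlg K g × K) :=
  lift K (cocycleRep K g)

noncomputable def uenvToDelta : UniversalEnvelopingAlgebra K g →ₗ[K] deltaAlg K g :=
  LinearMap.fst K _ K ∘ₗ LinearMap.applyₗ (0, 1) ∘ₗ (cocycleRepUEA K g).toLinearMap

variable {K g}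

lemma cocycleRepUEA_ι_apply (x : g) (p : deltaAlg K g × K) :
    cocycleRepUEA K g (ι K x) p = (⁅deltaι K g x, p.1⁆ + p.2 • deltaW K g x, 0) := by
  rw [cocycleRepUEA, lift_ι_apply]
  rfl

lemma snd_cocycleRepUEA_apply (u : UniversalEnvelopingAlgebra K g) (p : deltaAlg K g × K) :
    (cocycleRepUEA K g u p).2 = lieAugmentation K g u * p.2 := by
  induction u using induction_ι_mul generalizing p with
  | one => simp
  | add u v hu hv => simp [hu, hv, add_mul]
  | smul c u hu => simp [hu, mul_assoc]
  | ι_mul x u _ =>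
    rw [map_mul, map_mul, Module.End.mul_apply, cocycleRepUEA_ι_apply, lieAugmentation_ι,
      zero_mul, zero_mul]

lemma uenvToDelta_apply (u : UniversalEnvelopingAlgebra K g) :
    uenvToDelta K g u = (cocycleRepUEA K g u (0, 1)).1 := rfl

lemma uenvToDelta_one : uenvToDelta K g 1 = 0 := by
  simp [uenvToDelta_apply]

lemma uenvToDelta_ι_mul (x : g) (u : UniversalEnvelopingAlgebra K g) :
    uenvToDelta K g (ι K x * u)
      = ⁅deltaι K g x, uenvToDelta K g u⁆ + lieAugmentation K g u • deltaW K g x := by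
  rw [uenvToDelta_apply, uenvToDelta_apply, map_mul, Module.End.mul_apply,
    cocycleRepUEA_ι_apply, snd_cocycleRepUEA_apply, mul_one]

lemma uenvToDelta_ι (x : g) : uenvToDelta K g (ι K x) = deltaW K g x := by
  simpa [uenvToDelta_one] using uenvToDelta_ι_mul (K := K) x 1

lemma uenvToDelta_mem_deltaL (u : UniversalEnvelopingAlgebra K g) :
    uenvToDelta K g u ∈ deltaL K g := by
  induction u using induction_ι_mul with
  | one => simp [uenvToDelta_one]
  | add u v hu hv => simpa using add_mem hu hv
  | smul c u hu => simpa using (deltaL K g).smul_mem c hu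
  | ι_mul x u hu =>
    rw [uenvToDelta_ι_mul]
    exact add_mem ((deltaL K g).lie_mem hu) ((deltaL K g).smul_mem _ (deltaW_mem_deltaL x))

end Representation

section Inverse

variable {K : Type u} [Field K] {g : Type v} [LieRing g] [LieAlgebra K g]

open UniversalEnvelopingAlgebra

lemma semidirect_lie_fst (p q : UniversalEnvelopingAlgebra K g × g) :
    ⁅p, q⁆.1 = ι K p.2 * q.1 - ι K q.2 * p.1 := rfl

lemma semidirect_lie_snd (p q : UniversalEnvelopingAlgebra K g × g) :
    ⁅p, q⁆.2 = ⁅p.2, q.2⁆ := rfl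

variable (K g)

noncomputable def gammaSnd : gammaAlg K g →ₗ⁅K⁆ g :=
  { LinearMap.snd K _ g ∘ₗ (gammaAlg K g).toSubmodule.subtype with
    map_lie' := rfl }

noncomputable def gammaToDelta : gammaAlg K g →ₗ⁅K⁆ deltaAlg K g :=
  { (uenvToDelta K g ∘ₗ LinearMap.fst K _ g + (deltaιHom K g : g →ₗ[K] deltaAlg K g) ∘ₗ
      LinearMap.snd K _ g) ∘ₗ (gammaAlg K g).toSubmodule.subtype with
    map_lie' := by
      rintro ⟨⟨u, x⟩, hu⟩ ⟨⟨v, y⟩, hv⟩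
      have hu : lieAugmentation K g u = 0 := hu
      have hv : lieAugmentation K g v = 0 := hv
      have hφ : ⁅uenvToDelta K g u, uenvToDelta K g v⁆ = 0 :=
        lie_eq_zero_of_mem_deltaL (uenvToDelta_mem_deltaL u) (uenvToDelta_mem_deltaL v)
      show uenvToDelta K g (ι K x * v - ι K y * u) + deltaι K g ⁅x, y⁆
        = ⁅uenvToDelta K g u + deltaι K g x, uenvToDelta K g v + deltaι K g y⁆
      rw [map_sub, uenvToDelta_ι_mul, uenvToDelta_ι_mul, hu, hv, deltaι_lie, add_lie, lie_add,
        lie_add, hφ, ← lie_skew (deltaι K g y)]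
      simp only [zero_smul, add_zero]
      abel }

variable {K g}

lemma gammaToDelta_apply (p : gammaAlg K g) :
    gammaToDelta K g p = uenvToDelta K g (p : UniversalEnvelopingAlgebra K g × g).1
      + deltaι K g (p : UniversalEnvelopingAlgebra K g × g).2 := rfl

end Inverse

section Theta

variable {K : Type u} [Field K] {g : Type v} [LieRing g] [LieAlgebra K g]

open UniversalEnvelopingAlgebra

structure IsTheta (θ : deltaAlg K g →ₗ⁅K⁆ gammaAlg K g) : Prop where
  apply_deltaι (x : g) : (θ (deltaι K g x) : UniversalEnvelopingAlgebra K g × g) = (0, x)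
  apply_deltaψ (x : g) : (θ (deltaψ K g x) : UniversalEnvelopingAlgebra K g × g) = (-ι K x, x)

namespace IsTheta

variable {θ : deltaAlg K g →ₗ⁅K⁆ gammaAlg K g}

lemma apply_deltaW (hθ : IsTheta θ) (x : g) :
    (θ (deltaW K g x) : UniversalEnvelopingAlgebra K g × g) = (ι K x, 0) := by
  simp [deltaW_apply, hθ.apply_deltaι, hθ.apply_deltaψ]

lemma apply_uenvToDelta (hθ : IsTheta θ)
    (u : UniversalEnvelopingAlgebra K g) :
    (θ (uenvToDelta K g u) : UniversalEnvelopingAlgebra K g × g)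
      = (u - lieAugmentation K g u • 1, 0) := by
  induction u using induction_ι_mul with
  | one => simp [uenvToDelta_one, Prod.zero_eq_mk]
  | add u v hu hv =>
    rw [map_add, map_add, AddMemClass.coe_add, hu, hv, map_add, add_smul]
    ext
    · simp only [Prod.fst_add]
      abel
    · simp
  | smul c u hu =>
    rw [map_smul, map_smul, SetLike.val_smul, hu, map_smul, smul_assoc]
    ext <;> simp [smul_sub]
  | ι_mul x u hu =>
    rw [uenvToDelta_ι_mul, map_add, map_smul, LieHom.map_lie, AddMemClass.coe_add,
      SetLike.val_smul, LieSubalgebra.coe_bracket, hθ.apply_deltaι, hu,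
      hθ.apply_deltaW, map_mul, lieAugmentation_ι, zero_mul, zero_smul, sub_zero]
    ext
    · simp [semidirect_lie_fst, mul_sub, Algebra.mul_smul_comm]
    · simp [semidirect_lie_snd]

lemma leftInverse_gammaToDelta (hθ : IsTheta θ) :
    Function.LeftInverse (gammaToDelta K g) θ := by
  intro z
  suffices h : (gammaToDelta K g).comp (θ.comp (toDelta K g)) = toDelta K g by
    obtain ⟨z, rfl⟩ := toDelta_surjective K g z
    exact LieHom.congr_fun h z
  refine FreeLieAlgebra.hom_ext ?_
  rintro (x | x)
  · show gammaToDelta K g (θ (deltaι K g x)) = deltaι K g x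
    simp [gammaToDelta_apply, hθ.apply_deltaι]
  · show gammaToDelta K g (θ (deltaψ K g x)) = deltaψ K g x
    rw [gammaToDelta_apply, hθ.apply_deltaψ, map_neg, uenvToDelta_ι, deltaW_apply]
    abel

lemma rightInverse_gammaToDelta (hθ : IsTheta θ) :
    Function.RightInverse (gammaToDelta K g) θ := by
  rintro ⟨⟨u, x⟩, hu⟩
  have hu : lieAugmentation K g u = 0 := hu
  ext
  · simp [gammaToDelta_apply, hθ.apply_uenvToDelta, hθ.apply_deltaι, hu]
  · simp [gammaToDelta_apply, hθ.apply_uenvToDelta, hθ.apply_deltaι]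

lemma mem_deltaL_iff (hθ : IsTheta θ) (z : deltaAlg K g) :
    z ∈ deltaL K g ↔ (θ z : UniversalEnvelopingAlgebra K g × g).2 = 0 := by
  constructor
  · intro hz
    suffices h : deltaL K g ≤ ((gammaSnd K g).comp θ).ker from LieHom.mem_ker.mp (h hz)
    refine LieSubmodule.lieSpan_le.mpr ?_
    rintro _ ⟨x, rfl⟩
    exact LieHom.mem_ker.mpr (congrArg Prod.snd (hθ.apply_deltaW x))
  · intro hz
    rw [← hθ.leftInverse_gammaToDelta z, gammaToDelta_apply, hz, ← deltaιHom_apply, map_zero,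
      add_zero]
    exact uenvToDelta_mem_deltaL _

end IsTheta

end Theta

theorem delta_iso_aug_semidirect_general
    (K : Type u) [Field K]
    (g : Type v) [LieRing g] [LieAlgebra K g]
    (θ : deltaAlg K g →ₗ⁅K⁆ ↥(gammaAlg K g))
    (hθι : ∀ x : g,
      ((θ (deltaι K g x) : UniversalEnvelopingAlgebra K g × g)) = (0, x))
    (hθψ : ∀ x : g,
      ((θ (deltaψ K g x) : UniversalEnvelopingAlgebra K g × g))
        = (-(UniversalEnvelopingAlgebra.ι K x), x)) :
    Function.Bijective θ ∧
      ∀ z : deltaAlg K g, z ∈ deltaL K g ↔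
        ((θ z : UniversalEnvelopingAlgebra K g × g)).2 = 0 := by
  have hθ : IsTheta θ := ⟨hθι, hθψ⟩
  exact ⟨⟨hθ.leftInverse_gammaToDelta.injective, hθ.rightInverse_gammaToDelta.surjective⟩,
    hθ.mem_deltaL_iff⟩

/-- The homomorphism `θ : Δ → Γ = Aug(U(g)) ⋊ g` defined by `θ(x) = (0, x)`
and `θ(xᵠ) = (-x, x)` is an isomorphism of Lie algebras, carrying the ideal `𝓛` (generated
by the elements `x - xᵠ`) onto `Aug(U(g))` (the elements of `Γ` with vanishing second
component). -/
theorem delta_iso_aug_semidirect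
    (K : Type u) [Field K] (hchar : ringChar K ≠ 2)
    (g : Type v) [LieRing g] [LieAlgebra K g]
    (θ : deltaAlg K g →ₗ⁅K⁆ ↥(gammaAlg K g))
    (hθι : ∀ x : g,
      ((θ (deltaι K g x) : UniversalEnvelopingAlgebra K g × g)) = (0, x))
    (hθψ : ∀ x : g,
      ((θ (deltaψ K g x) : UniversalEnvelopingAlgebra K g × g))
        = (-(UniversalEnvelopingAlgebra.ι K x), x)) :
    Function.Bijective θ ∧
      ∀ z : deltaAlg K g, z ∈ deltaL K g ↔
        ((θ z : UniversalEnvelopingAlgebra K g × g)).2 = 0 :=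
  delta_iso_aug_semidirect_general K g θ hθι hθψ
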